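/- Let R = B(b) ∪ (⋃_{k≥1} B(a^k*b)) ∪ (B(a⁻¹) \ ⋃_{k≥1} B(a^{−k}*b⁻¹)) ⊆ F₂. Then e ∉ R and a·R = R ∪ {e}. (In particular, the indicator function of R differs from its translate by a only on a finite set.) -/
import Mathlib


open scoped Pointwise

/-- The free group on two generators. -/
abbrev F₂ := FreeGroup Bool

/-- The generator `a`. -/
def ga : F₂ := FreeGroup.of true

/-- The generator `b`. -/
def gb : F₂ := FreeGroup.of false

/-- The word length `|w|` of an element of the free group. -/
def wl (w : F₂) : ℕ := w.toWord.length

/-- The cylinder set `B(t)` of elements whose reduced word begins with the reduced word of `t`. -/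
def cyl (t : F₂) : Set F₂ := {x | ∃ y : F₂, x = t * y ∧ wl x = wl t + wl y}

/-- The set `R = B(b) ∪ (⋃_{k≥1} B(aᵏb)) ∪ (B(a⁻¹) \ ⋃_{k≥1} B(a⁻ᵏb⁻¹))`. -/
def Rset : Set F₂ :=
  cyl gb ∪ (⋃ k ∈ {k : ℕ | 1 ≤ k}, cyl (ga ^ k * gb)) ∪
    (cyl ga⁻¹ \ ⋃ k ∈ {k : ℕ | 1 ≤ k}, cyl (ga⁻¹ ^ k * gb⁻¹))

/-! ### Auxiliary lemmas -/

lemma mem_cyl_iff (t x : F₂) : x ∈ cyl t ↔ t.toWord <+: x.toWord := by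
  constructor
  · rintro ⟨y, rfl, hlen⟩
    have h1 : (t * y).toWord = FreeGroup.reduce (t.toWord ++ y.toWord) := by
      conv_lhs => rw [← FreeGroup.mk_toWord (x := t), ← FreeGroup.mk_toWord (x := y)]
      rw [FreeGroup.mul_mk, FreeGroup.toWord_mk]
    have hred : FreeGroup.Red (t.toWord ++ y.toWord) ((t*y).toWord) := h1 ▸ FreeGroup.reduce.red
    have hsub := hred.sublist
    have : t.toWord ++ y.toWord = (t*y).toWord := by
      symm; apply hsub.eq_of_length
      simpa [wl] using hlen
    exact ⟨y.toWord, this⟩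
  · rintro ⟨s, hs⟩
    have hsred : FreeGroup.reduce s = s := by
      have h1 : FreeGroup.Red (t.toWord ++ s) (t.toWord ++ FreeGroup.reduce s) :=
        (FreeGroup.Red.append_append_left_iff _).mpr FreeGroup.reduce.red
      have h2 : FreeGroup.reduce (t.toWord ++ s) = t.toWord ++ s := by
        rw [hs]; exact FreeGroup.reduce_toWord x
      have := FreeGroup.reduce.min (L₁ := t.toWord ++ s) (h2 ▸ h1)
      rw [h2] at this
      exact (List.append_cancel_left this).symm
    refine ⟨FreeGroup.mk s, ?_, ?_⟩
    · rw [← FreeGroup.mk_toWord (x := x), ← hs, ← FreeGroup.mul_mk, FreeGroup.mk_toWord]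
    · simp [wl, FreeGroup.toWord_mk, hsred, ← hs]

lemma ga_inv_mk : ga⁻¹ = FreeGroup.mk [(true, false)] := by
  rw [ga, FreeGroup.of, FreeGroup.inv_mk]; rfl

lemma toWord_ga_inv : ga⁻¹.toWord = [(true, false)] := by
  rw [ga_inv_mk, FreeGroup.toWord_mk]; rfl

lemma toWord_gb : gb.toWord = [(false, true)] := FreeGroup.toWord_of _

lemma reduce_repl_append (p q : Bool × Bool) (h : p.1 ≠ q.1) (k : ℕ) :
    FreeGroup.reduce (List.replicate k p ++ [q]) = List.replicate k p ++ [q] := by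
  induction k with
  | zero => simp [FreeGroup.reduce_singleton]
  | succ n ih =>
    rw [List.replicate_succ, List.cons_append, FreeGroup.reduce.cons, ih]
    cases n with
    | zero => simp [h.symm]; intro hc; exact absurd hc h
    | succ m => simp [List.replicate_succ]

lemma ga_inv_pow_mk (k : ℕ) : ga⁻¹ ^ k = FreeGroup.mk (List.replicate k (true, false)) := by
  rw [ga_inv_mk, FreeGroup.pow_mk, List.flatten_replicate_singleton]

lemma toWord_akb (k : ℕ) :
    (ga ^ k * gb).toWord = List.replicate k (true, true) ++ [(false, true)] := by
  rw [ga, gb, FreeGroup.of, FreeGroup.pow_mk, List.flatten_replicate_singleton]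
  rw [show FreeGroup.of false = FreeGroup.mk [((false:Bool), true)] from rfl] at *
  rw [FreeGroup.mul_mk, FreeGroup.toWord_mk]
  exact reduce_repl_append _ _ (by simp) k

lemma toWord_akb' (k : ℕ) :
    (ga⁻¹ ^ k * gb⁻¹).toWord = List.replicate k (true, false) ++ [(false, false)] := by
  rw [ga_inv_pow_mk, gb, FreeGroup.of, FreeGroup.inv_mk]
  rw [show FreeGroup.invRev [((false : Bool), true)] = [(false, false)] from rfl,
    FreeGroup.mul_mk, FreeGroup.toWord_mk]
  exact reduce_repl_append _ _ (by simp) k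

lemma toWord_mul_ga_inv_cancel (x : F₂) (L : List (Bool × Bool))
    (h : x.toWord = (true, true) :: L) : (ga⁻¹ * x).toWord = L := by
  have hL : FreeGroup.reduce ((true, true) :: L) = (true, true) :: L := by
    rw [← h]; exact FreeGroup.reduce_toWord x
  rw [← FreeGroup.mk_toWord (x := x), h, ga_inv_mk, FreeGroup.mul_mk, FreeGroup.toWord_mk]
  rw [List.cons_append, List.nil_append, FreeGroup.reduce.cons, hL]
  simp

lemma toWord_mul_ga_inv_nocancel (x : F₂)
    (h : ∀ L, x.toWord ≠ (true, true) :: L) :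
    (ga⁻¹ * x).toWord = (true, false) :: x.toWord := by
  have hL : FreeGroup.reduce x.toWord = x.toWord := FreeGroup.reduce_toWord x
  rw [← FreeGroup.mk_toWord (x := x), ga_inv_mk, FreeGroup.mul_mk, FreeGroup.toWord_mk,
    FreeGroup.mk_toWord, List.cons_append, List.nil_append, FreeGroup.reduce.cons, hL]
  rcases hx : x.toWord with _ | ⟨⟨c, d⟩, tl⟩
  · rfl
  · have : (c, d) ≠ (true, true) := by
      intro he; exact h tl (by rw [hx, he])
    cases c <;> cases d <;> simp_all

/-- The predicate `∃ k ≥ 1, aᵏb prefixes W`. -/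
abbrev PP (W : List (Bool × Bool)) : Prop :=
  ∃ k, 1 ≤ k ∧ List.replicate k ((true : Bool), true) ++ [((false : Bool), true)] <+: W

/-- The predicate `∃ k ≥ 1, a⁻ᵏb⁻¹ prefixes W`. -/
abbrev QQ (W : List (Bool × Bool)) : Prop :=
  ∃ k, 1 ≤ k ∧ List.replicate k ((true : Bool), false) ++ [((false : Bool), false)] <+: W

lemma mem_Rset_iff (x : F₂) :
    x ∈ Rset ↔ ([(false, true)] <+: x.toWord ∨ PP x.toWord ∨
      ([(true, false)] <+: x.toWord ∧ ¬ QQ x.toWord)) := by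
  simp only [Rset, Set.mem_union, Set.mem_diff, Set.mem_iUnion, Set.mem_setOf_eq,
    mem_cyl_iff, toWord_gb, toWord_ga_inv, toWord_akb, toWord_akb', PP, QQ, exists_prop,
    or_assoc]

lemma pref_step {p q : Bool × Bool} {k : ℕ} {hd : Bool × Bool} {tl : List (Bool × Bool)}
    (hk : 1 ≤ k) :
    (List.replicate k p ++ [q] <+: hd :: tl) ↔
      (hd = p ∧ List.replicate (k - 1) p ++ [q] <+: tl) := by
  obtain ⟨m, rfl⟩ : ∃ m, k = m + 1 := ⟨k - 1, by omega⟩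
  simp [List.replicate_succ, List.cons_prefix_cons, eq_comm]

lemma shift (p q : Bool × Bool) (M : List (Bool × Bool)) (hM : ∀ tl, M ≠ q :: tl) :
    (∃ k, 1 ≤ k ∧ List.replicate k p ++ [q] <+: p :: M) ↔
      (∃ k, 1 ≤ k ∧ List.replicate k p ++ [q] <+: M) := by
  constructor
  · rintro ⟨k, hk, hpre⟩
    rw [pref_step hk] at hpre
    obtain ⟨-, h2⟩ := hpre
    rcases Nat.lt_or_ge k 2 with hk2 | hk2
    · exfalso
      have hk1 : k - 1 = 0 := by omega
      rw [hk1] at h2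
      obtain ⟨t, ht⟩ := h2
      exact hM t (by simpa using ht.symm)
    · exact ⟨k - 1, by omega, h2⟩
  · rintro ⟨k, hk, hpre⟩
    refine ⟨k + 1, by omega, ?_⟩
    rw [pref_step (by omega)]
    simpa using hpre

lemma one_notin_Rset : (1 : F₂) ∉ Rset := by
  rw [mem_Rset_iff]
  simp [PP, FreeGroup.toWord_one]

lemma key (x : F₂) : ga⁻¹ * x ∈ Rset ↔ (x ∈ Rset ∨ x = 1) := by
  rw [mem_Rset_iff, mem_Rset_iff, ← FreeGroup.toWord_eq_nil_iff]
  rcases hW : x.toWord with _ | ⟨⟨c, d⟩, L⟩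
  · -- x = 1
    rw [toWord_mul_ga_inv_nocancel x (by rw [hW]; simp), hW]
    simp only [eq_self_iff_true, or_true, iff_true]
    refine Or.inr (Or.inr ⟨List.prefix_refl _, ?_⟩)
    rintro ⟨k, hk, hpre⟩
    rw [pref_step hk] at hpre
    simpa using hpre.2
  · cases c <;> cases d
    · -- head (false, false)
      rw [toWord_mul_ga_inv_nocancel x (by rw [hW]; simp), hW]
      constructor
      · rintro (h | ⟨k, hk, h⟩ | ⟨-, hq⟩)
        · simp [List.cons_prefix_cons] at h
        · rw [pref_step hk] at h; simp at h
        · exact absurd ⟨1, le_refl 1, by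
            rw [pref_step (le_refl 1)]
            exact ⟨rfl, by simp [List.cons_prefix_cons]⟩⟩ hq
      · rintro ((h | ⟨k, hk, h⟩ | ⟨h, -⟩) | h)
        · simp [List.cons_prefix_cons] at h
        · rw [pref_step hk] at h; simp at h
        · simp [List.cons_prefix_cons] at h
        · simp at h
    · -- head (false, true) : x ∈ B(b)
      rw [toWord_mul_ga_inv_nocancel x (by rw [hW]; simp), hW]
      constructor
      · intro _
        exact Or.inl (Or.inl (by simp [List.cons_prefix_cons]))
      · intro _
        refine Or.inr (Or.inr ⟨by simp [List.cons_prefix_cons], ?_⟩)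
        rintro ⟨k, hk, hpre⟩
        rw [pref_step hk] at hpre
        obtain ⟨-, h2⟩ := hpre
        rcases Nat.lt_or_ge k 2 with hk2 | hk2
        · rw [show k - 1 = 0 by omega] at h2
          simp [List.cons_prefix_cons] at h2
        · rw [pref_step (by omega)] at h2
          simp at h2
    · -- head (true, false) : x ∈ B(a⁻¹)
      rw [toWord_mul_ga_inv_nocancel x (by rw [hW]; simp), hW]
      have hshift := shift (true, false) (false, false) ((true, false) :: L)
        (by intro tl h; simp at h)
      constructor
      · rintro (h | ⟨k, hk, h⟩ | ⟨-, hq⟩)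
        · simp [List.cons_prefix_cons] at h
        · rw [pref_step hk] at h; simp at h
        · refine Or.inl (Or.inr (Or.inr ⟨by simp [List.cons_prefix_cons], ?_⟩))
          intro hQ; exact hq (hshift.mpr hQ)
      · rintro ((h | ⟨k, hk, h⟩ | ⟨-, hq⟩) | h)
        · simp [List.cons_prefix_cons] at h
        · rw [pref_step hk] at h; simp at h
        · exact Or.inr (Or.inr ⟨by simp [List.cons_prefix_cons], fun hQ => hq (hshift.mp hQ)⟩)
        · simp at h
    · -- head (true, true) : x ∈ B(a)
      rw [toWord_mul_ga_inv_cancel x L hW]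
      rcases hL : L with _ | ⟨⟨c', d'⟩, L'⟩
      · -- x = a
        constructor
        · rintro (h | ⟨k, hk, h⟩ | ⟨h, -⟩)
          · simp at h
          · simp at h
          · simp at h
        · rintro ((h | ⟨k, hk, h⟩ | ⟨h, -⟩) | h)
          · simp [List.cons_prefix_cons] at h
          · rw [pref_step hk] at h
            simpa using h.2
          · simp [List.cons_prefix_cons] at h
          · simp at h
      · cases c' <;> cases d'
        · -- second letter (false, false)
          constructor
          · rintro (h | ⟨k, hk, h⟩ | ⟨h, -⟩)
            · simp [List.cons_prefix_cons] at h
            · rw [pref_step hk] at h; simp at h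
            · simp [List.cons_prefix_cons] at h
          · rintro ((h | ⟨k, hk, h⟩ | ⟨h, -⟩) | h)
            · simp [List.cons_prefix_cons] at h
            · rw [pref_step hk] at h
              obtain ⟨-, h2⟩ := h
              rcases Nat.lt_or_ge k 2 with hk2 | hk2
              · rw [show k - 1 = 0 by omega] at h2
                simp [List.cons_prefix_cons] at h2
              · rw [pref_step (by omega)] at h2
                simp at h2
            · simp [List.cons_prefix_cons] at h
            · simp at h
        · -- second letter (false, true)
          constructor
          · intro _
            refine Or.inl (Or.inr (Or.inl ⟨1, le_refl 1, ?_⟩))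
            rw [pref_step (le_refl 1)]
            exact ⟨rfl, by simp [List.cons_prefix_cons]⟩
          · intro _
            exact Or.inl (by simp [List.cons_prefix_cons])
        · -- second letter (true, false) : impossible, word not reduced
          exfalso
          have hred : FreeGroup.reduce x.toWord =
              [] ++ ((true : Bool), true) :: ((true : Bool), !true) :: L' := by
            rw [FreeGroup.reduce_toWord, hW, hL]; rfl
          exact FreeGroup.reduce.not hred
        · -- second letter (true, true)
          have hshift := shift (true, true) (false, true) ((true, true) :: L')
            (by intro tl h; simp at h)
          constructor
          · rintro (h | hP | ⟨h, -⟩)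
            · simp [List.cons_prefix_cons] at h
            · exact Or.inl (Or.inr (Or.inl (hshift.mpr hP)))
            · simp [List.cons_prefix_cons] at h
          · rintro ((h | hP | ⟨h, -⟩) | h)
            · simp [List.cons_prefix_cons] at h
            · exact Or.inr (Or.inl (hshift.mp hP))
            · simp [List.cons_prefix_cons] at h
            · simp at h

/-- `e ∉ R` and `a·R = R ∪ {e}`. -/
theorem stmt_3 : (1 : F₂) ∉ Rset ∧ ga • Rset = Rset ∪ {1} := by
  refine ⟨one_notin_Rset, ?_⟩
  ext x
  rw [Set.mem_smul_set_iff_inv_smul_mem, smul_eq_mul, Set.mem_union, Set.mem_singleton_iff]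
  exact key x
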